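/- Let H : ℂ → ℂ be given by H(h) = −(1/27)·(h−4)³/h². For every c ∈ ℂ with c ≠ 0 and c ≠ 1, the set {z ∈ ℂ : z ≠ 0 and H(z) = c} has exactly 3 elements. -/

import Mathlib

/-- The hessian dynamical system in the coordinate `h = j/(2⁶·3³)`. -/
noncomputable def Hdyn (h : ℂ) : ℂ := -(1 / 27) * (h - 4) ^ 3 / h ^ 2

/-! Clearing denominators, `H(z) = c` with `z ≠ 0` becomes `(z - 4)³ + 27 c z² = 0`. This cubic has
discriminant `2⁸ 3⁹ c² (c - 1)`, so for `c ∉ {0, 1}` it has three distinct roots, none of them `0`. -/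

theorem Cubic.card_roots_toFinset_of_discr_ne_zero {K : Type*} [Field K] [IsAlgClosed K]
    [DecidableEq K] {P : Cubic K} (ha : P.a ≠ 0) (hd : P.discr ≠ 0) :
    P.roots.toFinset.card = 3 := by
  have hmap : P.map (RingHom.id K) = P := by simp [Cubic.map]
  rw [← hmap]
  exact Cubic.card_roots_of_discr_ne_zero ha (IsAlgClosed.splits _) hd

def hdynFiberCubic {R : Type*} [CommRing R] (c : R) : Cubic R := ⟨1, 27 * c - 12, 48, -64⟩

theorem hdynFiberCubic_discr {R : Type*} [CommRing R] (c : R) :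
    (hdynFiberCubic c).discr = 2 ^ 8 * 3 ^ 9 * c ^ 2 * (c - 1) := by
  simp only [Cubic.discr, hdynFiberCubic]
  ring

theorem mem_hdynFiberCubic_roots_iff {c z : ℂ} :
    z ∈ (hdynFiberCubic c).roots ↔ z ≠ 0 ∧ Hdyn z = c := by
  rw [Cubic.mem_roots_iff (Cubic.ne_zero_of_a_ne_zero one_ne_zero)]
  simp only [hdynFiberCubic, Hdyn]
  constructor
  · intro hroot
    have hz : z ≠ 0 := by
      rintro rfl
      norm_num at hroot
    refine ⟨hz, ?_⟩
    field_simp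
    linear_combination -hroot
  · rintro ⟨hz, hH⟩
    field_simp at hH
    linear_combination -hH

theorem generic_fiber_has_three_points (c : ℂ) (hc0 : c ≠ 0) (hc1 : c ≠ 1) :
    {z : ℂ | z ≠ 0 ∧ Hdyn z = c}.ncard = 3 := by
  classical
  have hfiber : {z : ℂ | z ≠ 0 ∧ Hdyn z = c} = ↑(hdynFiberCubic c).roots.toFinset := by
    ext z
    simp [mem_hdynFiberCubic_roots_iff]
  have hdiscr : (hdynFiberCubic c).discr ≠ 0 := by
    rw [hdynFiberCubic_discr]
    exact mul_ne_zero (mul_ne_zero (by norm_num) (pow_ne_zero 2 hc0)) (sub_ne_zero.mpr hc1)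
  rw [hfiber, Set.ncard_coe_finset]
  exact Cubic.card_roots_toFinset_of_discr_ne_zero one_ne_zero hdiscr
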